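/- arXiv:2605.11291 — 3 statements merged into one kernel-verified Lean document; each statement's English description precedes it below -/
import Mathlib

section
/- Let (Ω, 𝔽, P) be a probability space, d ≥ 1, and let z₁, z₂ : Ω → ℝ^d be independent, identically distributed, integrable random vectors with common mean μ := E[z₁] = E[z₂]. If there is a constant γ ∈ ℝ such that the inner product ⟨z₁, z₂⟩ = γ almost surely, then z₁ = μ almost surely, z₂ = μ almost surely, and γ = ‖μ‖². -/
/-!
Write `ν` for the common law. Independence makes the joint law `ν ⊗ ν`, so `⟪x, y⟫ = γ` for
`ν`-a.e. `x` and `ν`-a.e. `y`. Integrating in `y` gives `⟪x, μ⟫ = γ` for a.e. `x`, and integrating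
once more gives `γ = ‖μ‖²`; hence the centred vectors satisfy `⟪x - μ, y - μ⟫ = 0` for a.e. `x`
and a.e. `y`. The centred vectors then lie a.s. in the smallest subspace `W` that carries them
a.s., and also a.s. in `Wᗮ`, because `W` lies in the kernel of `⟪x - μ, ·⟫` for a.e. `x`.
-/

open MeasureTheory ProbabilityTheory
open scoped InnerProductSpace

section EssentialSpan

variable {α E : Type*} [MeasurableSpace α] [NormedAddCommGroup E] [InnerProductSpace ℝ E]
  [FiniteDimensional ℝ E]

lemma exists_least_submodule_ae_mem (ρ : Measure α) (f : α → E) :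
    ∃ W : Submodule ℝ E, (∀ᵐ a ∂ρ, f a ∈ W) ∧
      ∀ V : Submodule ℝ E, (∀ᵐ a ∂ρ, f a ∈ V) → W ≤ V := by
  obtain ⟨W, hW, hmin⟩ :=
    wellFounded_lt.has_min {W : Submodule ℝ E | ∀ᵐ a ∂ρ, f a ∈ W} ⟨⊤, by simp⟩
  refine ⟨W, hW, fun V hV => ?_⟩
  have hWV : ∀ᵐ a ∂ρ, f a ∈ W ⊓ V := by
    filter_upwards [hW, hV] with a haW haV using ⟨haW, haV⟩
  exact inf_eq_left.mp (inf_le_left.eq_of_not_lt (hmin _ hWV))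

lemma ae_eq_zero_of_ae_ae_inner_eq_zero {ρ : Measure α} {f : α → E}
    (h : ∀ᵐ a ∂ρ, ∀ᵐ b ∂ρ, ⟪f a, f b⟫_ℝ = 0) : ∀ᵐ a ∂ρ, f a = 0 := by
  obtain ⟨W, hW, hleast⟩ := exists_least_submodule_ae_mem ρ f
  have hperp : ∀ᵐ a ∂ρ, f a ∈ Wᗮ := by
    filter_upwards [h] with a ha
    have hker : W ≤ LinearMap.ker (innerₛₗ ℝ (f a)) := hleast _ ha
    exact (Submodule.mem_orthogonal' W (f a)).mpr fun u hu => hker hu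
  filter_upwards [hW, hperp] with a haW haperp
  simpa using (Submodule.inf_orthogonal_eq_bot W).le ⟨haW, haperp⟩

end EssentialSpan

section Mean

variable {E : Type*} [NormedAddCommGroup E] [InnerProductSpace ℝ E] [CompleteSpace E]

lemma inner_integral_eq_of_ae_inner_eq {α : Type*} [MeasurableSpace α] {ρ : Measure α}
    [IsProbabilityMeasure ρ] {f : α → E} (hf : Integrable f ρ) {x : E} {c : ℝ}
    (h : ∀ᵐ a ∂ρ, ⟪x, f a⟫_ℝ = c) : ⟪x, ∫ a, f a ∂ρ⟫_ℝ = c := by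
  rw [← integral_inner hf, integral_congr_ae h]
  simp

theorem ae_eq_integral_of_ae_ae_inner_eq [FiniteDimensional ℝ E] [MeasurableSpace E]
    {ν : Measure E} [IsProbabilityMeasure ν] (hint : Integrable (fun x => x) ν) {γ : ℝ}
    (h : ∀ᵐ x ∂ν, ∀ᵐ y ∂ν, ⟪x, y⟫_ℝ = γ) :
    (∀ᵐ x ∂ν, x = ∫ y, y ∂ν) ∧ γ = ‖∫ y, y ∂ν‖ ^ 2 := by
  set m := ∫ y, y ∂ν
  have hxm : ∀ᵐ x ∂ν, ⟪x, m⟫_ℝ = γ := by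
    filter_upwards [h] with x hx using inner_integral_eq_of_ae_inner_eq hint hx
  have hγ : γ = ‖m‖ ^ 2 := by
    rw [← real_inner_self_eq_norm_sq]
    refine (inner_integral_eq_of_ae_inner_eq hint ?_).symm
    filter_upwards [hxm] with x hx
    rwa [real_inner_comm]
  have hcentred : ∀ᵐ x ∂ν, ∀ᵐ y ∂ν, ⟪x - m, y - m⟫_ℝ = 0 := by
    filter_upwards [h, hxm] with x hx hxm'
    filter_upwards [hx, hxm] with y hy hym
    rw [inner_sub_left, inner_sub_right, inner_sub_right, hy, hxm', real_inner_comm y m, hym,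
      real_inner_self_eq_norm_sq, ← hγ]
    ring
  refine ⟨?_, hγ⟩
  filter_upwards [ae_eq_zero_of_ae_ae_inner_eq_zero hcentred] with x hx
  exact sub_eq_zero.mp hx

end Mean

lemma ProbabilityTheory.IndepFun.ae_ae_map_of_ae {Ω α β : Type*} [MeasurableSpace Ω] [MeasurableSpace α]
    [MeasurableSpace β] {P : Measure Ω} [IsProbabilityMeasure P] {X : Ω → α} {Y : Ω → β}
    (hX : Measurable X) (hY : Measurable Y) (hXY : IndepFun X Y P) {p : α × β → Prop}
    (hp : MeasurableSet {q | p q}) (h : ∀ᵐ ω ∂P, p (X ω, Y ω)) :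
    ∀ᵐ x ∂P.map X, ∀ᵐ y ∂P.map Y, p (x, y) := by
  refine Measure.ae_ae_of_ae_prod ?_
  rw [← (indepFun_iff_map_prod_eq_prod_map_map hX.aemeasurable hY.aemeasurable).mp hXY]
  exact (ae_map_iff (hX.prodMk hY).aemeasurable hp).mpr h

theorem stmt2_general {Ω : Type*} [MeasurableSpace Ω] (P : Measure Ω) [IsProbabilityMeasure P]
    (d : ℕ)
    (z₁ z₂ : Ω → EuclideanSpace ℝ (Fin d))
    (h₁ : Measurable z₁) (h₂ : Measurable z₂)
    (hint₁ : Integrable z₁ P)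
    (hindep : IndepFun z₁ z₂ P)
    (hid : Measure.map z₁ P = Measure.map z₂ P)
    (μ : EuclideanSpace ℝ (Fin d))
    (hμ₁ : μ = ∫ ω, z₁ ω ∂P)
    (γ : ℝ) (hγ : ∀ᵐ ω ∂P, (inner ℝ (z₁ ω) (z₂ ω) : ℝ) = γ) :
    (∀ᵐ ω ∂P, z₁ ω = μ) ∧ (∀ᵐ ω ∂P, z₂ ω = μ) ∧ γ = ‖μ‖ ^ 2 := by
  set ν := P.map z₁
  have : IsProbabilityMeasure ν := Measure.isProbabilityMeasure_map h₁.aemeasurable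
  have hset : MeasurableSet {q : EuclideanSpace ℝ (Fin d) × EuclideanSpace ℝ (Fin d) |
      ⟪q.1, q.2⟫_ℝ = γ} :=
    measurableSet_eq_fun (continuous_fst.inner continuous_snd).measurable measurable_const
  have hγν : ∀ᵐ x ∂ν, ∀ᵐ y ∂ν, ⟪x, y⟫_ℝ = γ := by
    simpa only [← hid] using hindep.ae_ae_map_of_ae h₁ h₂ hset hγ
  have hintν : Integrable (fun x => x) ν :=
    (integrable_map_measure aestronglyMeasurable_id h₁.aemeasurable).mpr hint₁
  have hmean : ∫ x, x ∂ν = μ := by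
    rw [hμ₁]
    exact integral_map h₁.aemeasurable aestronglyMeasurable_id
  obtain ⟨hconst, hγμ⟩ := ae_eq_integral_of_ae_ae_inner_eq hintν hγν
  rw [hmean] at hconst hγμ
  have hconst₂ : ∀ᵐ x ∂P.map z₂, x = μ := by rwa [← hid]
  exact ⟨ae_of_ae_map h₁.aemeasurable hconst, ae_of_ae_map h₂.aemeasurable hconst₂, hγμ⟩

/-- If `z₁, z₂ : Ω → ℝ^d` are i.i.d. integrable random vectors with common mean
`μ = E[z₁] = E[z₂]`, and `⟨z₁, z₂⟩ = γ` almost surely for a constant `γ`, then `z₁ = μ` a.s.,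
`z₂ = μ` a.s., and `γ = ‖μ‖²`. -/
theorem stmt2 {Ω : Type*} [MeasurableSpace Ω] (P : Measure Ω) [IsProbabilityMeasure P]
    (d : ℕ) (hd : 1 ≤ d)
    (z₁ z₂ : Ω → EuclideanSpace ℝ (Fin d))
    (h₁ : Measurable z₁) (h₂ : Measurable z₂)
    (hint₁ : Integrable z₁ P) (hint₂ : Integrable z₂ P)
    (hindep : IndepFun z₁ z₂ P)
    (hid : Measure.map z₁ P = Measure.map z₂ P)
    (μ : EuclideanSpace ℝ (Fin d))
    (hμ₁ : μ = ∫ ω, z₁ ω ∂P) (hμ₂ : μ = ∫ ω, z₂ ω ∂P)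
    (γ : ℝ) (hγ : ∀ᵐ ω ∂P, (inner ℝ (z₁ ω) (z₂ ω) : ℝ) = γ) :
    (∀ᵐ ω ∂P, z₁ ω = μ) ∧ (∀ᵐ ω ∂P, z₂ ω = μ) ∧ γ = ‖μ‖ ^ 2 :=
  stmt2_general P d z₁ z₂ h₁ h₂ hint₁ hindep hid μ hμ₁ γ hγ
end

section
/- Let k ≥ 1, C ≥ 2, λ₁,…,λ_C ∈ (0,1) with ∑_{i=1}^C λᵢ = 1, and let ψ : ℝ^k → ℝ be argument-wise strictly increasing. If A* ∈ 𝒜* satisfies S(A*) ≤ S(A) for all A ∈ 𝒜*, then zero is an eigenvalue of A*; equivalently, A* is singular, so rank(A*) ≤ C − 1. -/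
/-!
If `A*` were nonsingular it would be positive definite, hence bounded below by `r • 1` for some
`r > 0`. Subtracting `r` from the two symmetric off-diagonal entries `(i, j), (j, i)` then keeps the
matrix positive semidefinite with unit diagonal, while every entry weakly decreases and the entry
`(i, j)` strictly decreases. With positive weights and `ψ` strictly increasing in each argument this
strictly decreases `S` (already the term with `j₁ = … = j_k = j` in row `i` drops), contradicting
minimality.
-/

open Matrix

/-- `ψ : ℝ^k → ℝ` is argument-wise strictly increasing. -/
def ArgwiseStrictMono {k : ℕ} (ψ : (Fin k → ℝ) → ℝ) : Prop :=
  ∀ (i : Fin k) (t : Fin k → ℝ) (s s' : ℝ), s < s' →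
    ψ (Function.update t i s) < ψ (Function.update t i s')

/-- `S(A) = ∑_{i, j₁,…,j_k} (λᵢ ∏ₜ λ_{jₜ}) ψ(A_{i j₁} − 1, …, A_{i j_k} − 1)`. -/
noncomputable def S {k C : ℕ} (ψ : (Fin k → ℝ) → ℝ) (lam : Fin C → ℝ)
    (A : Matrix (Fin C) (Fin C) ℝ) : ℝ :=
  ∑ i : Fin C, ∑ j : Fin k → Fin C,
    (lam i * ∏ t, lam (j t)) * ψ (fun t => A i (j t) - 1)

/-- `𝒜*` : real symmetric PSD `C×C` matrices with unit diagonal. -/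
def AstarSet (C : ℕ) : Set (Matrix (Fin C) (Fin C) ℝ) :=
  {A | A.PosSemidef ∧ ∀ i, A i i = 1}

open Function

namespace ArgwiseStrictMono

variable {k : ℕ} {ψ : (Fin k → ℝ) → ℝ}

theorem strictMono_update (hψ : ArgwiseStrictMono ψ) (i : Fin k) (t : Fin k → ℝ) :
    StrictMono fun s => ψ (update t i s) :=
  fun _ _ => hψ i t _ _

theorem monotone (hψ : ArgwiseStrictMono ψ) : Monotone ψ := by
  classical
  intro s s' hss'
  suffices ∀ F : Finset (Fin k), ψ (F.piecewise s s') ≤ ψ s' by simpa using this Finset.univ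
  intro F
  induction F using Finset.induction_on with
  | empty => simp
  | insert a F ha ih =>
    calc ψ ((insert a F).piecewise s s') = ψ (update (F.piecewise s s') a (s a)) := by
          rw [Finset.piecewise_insert]
      _ ≤ ψ (update (F.piecewise s s') a (s' a)) := (hψ.strictMono_update a _).monotone (hss' a)
      _ = ψ (F.piecewise s s') := by rw [← F.piecewise_eq_of_notMem s s' ha, update_eq_self]
      _ ≤ ψ s' := ih

theorem lt_of_le_of_lt (hψ : ArgwiseStrictMono ψ) {s s' : Fin k → ℝ} (hss' : s ≤ s') {t : Fin k}
    (ht : s t < s' t) : ψ s < ψ s' :=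
  calc ψ s = ψ (update s t (s t)) := by rw [update_eq_self]
    _ < ψ (update s t (s' t)) := hψ t s _ _ ht
    _ ≤ ψ s' := hψ.monotone (update_le_iff.2 ⟨le_rfl, fun j _ => hss' j⟩)

end ArgwiseStrictMono

theorem S_lt_S_of_le_of_lt {k C : ℕ} (hk : 1 ≤ k) {lam : Fin C → ℝ} (hlam : ∀ i, 0 < lam i)
    {ψ : (Fin k → ℝ) → ℝ} (hψ : ArgwiseStrictMono ψ) {A B : Matrix (Fin C) (Fin C) ℝ}
    (hle : ∀ i j, B i j ≤ A i j) {i j : Fin C} (hlt : B i j < A i j) : S ψ lam B < S ψ lam A := by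
  have hweight : ∀ i (js : Fin k → Fin C), 0 < lam i * ∏ t, lam (js t) :=
    fun i js => mul_pos (hlam i) (Finset.prod_pos fun t _ => hlam (js t))
  have hterm : ∀ i (js : Fin k → Fin C),
      (lam i * ∏ t, lam (js t)) * ψ (fun t => B i (js t) - 1)
        ≤ (lam i * ∏ t, lam (js t)) * ψ (fun t => A i (js t) - 1) := fun i js =>
    mul_le_mul_of_nonneg_left (hψ.monotone fun t => by linarith [hle i (js t)])
      (hweight i js).le
  refine Finset.sum_lt_sum (fun i _ => Finset.sum_le_sum fun js _ => hterm i js)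
    ⟨i, Finset.mem_univ _, Finset.sum_lt_sum (fun js _ => hterm i js)
      ⟨fun _ => j, Finset.mem_univ _, mul_lt_mul_of_pos_left ?_ (hweight i _)⟩⟩
  exact hψ.lt_of_le_of_lt (fun t => by linarith [hle i j]) (t := ⟨0, hk⟩) (by linarith)

open scoped MatrixOrder in
theorem Matrix.PosDef.exists_posSemidef_sub_smul {n : Type*} [Fintype n] [DecidableEq n]
    {A H : Matrix n n ℝ} (hA : A.PosDef) (hH : (1 - H).PosSemidef) :
    ∃ r : ℝ, 0 < r ∧ (A - r • H).PosSemidef := by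
  cases isEmpty_or_nonempty n
  · exact ⟨1, one_pos, Subsingleton.elim 0 (A - (1 : ℝ) • H) ▸ .zero⟩
  obtain ⟨r, hr, hrA⟩ := (CFC.exists_pos_algebraMap_le_iff hA.isHermitian.isSelfAdjoint).2
    fun x hx => hA.isStrictlyPositive.spectrum_pos hx
  rw [Algebra.algebraMap_eq_smul_one, Matrix.le_iff] at hrA
  refine ⟨r, hr, ?_⟩
  have hsplit : A - r • H = (A - r • 1) + r • (1 - H) := by rw [smul_sub]; abel
  exact hsplit ▸ hrA.add (hH.smul hr.le)

theorem Matrix.posSemidef_one_sub_single_add_single {n : Type*} [Fintype n] [DecidableEq n]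
    {i j : n} (hij : i ≠ j) : (1 - (single i j (1 : ℝ) + single j i 1)).PosSemidef := by
  refine .of_dotProduct_mulVec_nonneg (by simp [IsHermitian, add_comm]) fun x => ?_
  have hpair : x i * x i + x j * x j ≤ x ⬝ᵥ x := by
    simpa [dotProduct, Finset.sum_pair hij] using
      Finset.sum_le_sum_of_subset_of_nonneg (Finset.subset_univ {i, j})
        fun l _ _ => mul_self_nonneg (x l)
  simp only [star_trivial, sub_mulVec, one_mulVec, add_mulVec, single_mulVec_eq, dotProduct_sub,
    dotProduct_add, dotProduct_smul, dotProduct_single_one, smul_eq_mul]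
  nlinarith [sq_nonneg (x i - x j)]

theorem Matrix.rank_lt_card_of_mulVec_eq_zero {K m n : Type*} [Field K] [Fintype m] [Fintype n]
    {A : Matrix m n K} {v : n → K} (hv : v ≠ 0) (hAv : A *ᵥ v = 0) :
    A.rank < Fintype.card n := by
  have hker : 0 < Module.finrank K (LinearMap.ker A.mulVecLin) :=
    Module.finrank_pos_iff_exists_ne_zero.2 ⟨⟨v, hAv⟩, fun h => hv (congrArg Subtype.val h)⟩
  have := LinearMap.finrank_range_add_finrank_ker A.mulVecLin
  rw [Module.finrank_fintype_fun_eq_card] at this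
  have hrank : A.rank = Module.finrank K (LinearMap.range A.mulVecLin) := rfl
  omega

theorem det_eq_zero_of_isMinOn_S {k C : ℕ} (hk : 1 ≤ k) (hC : 2 ≤ C) {lam : Fin C → ℝ}
    (hlam : ∀ i, 0 < lam i) {ψ : (Fin k → ℝ) → ℝ} (hψ : ArgwiseStrictMono ψ)
    {A : Matrix (Fin C) (Fin C) ℝ} (hA : A ∈ AstarSet C)
    (hmin : IsMinOn (S ψ lam) (AstarSet C) A) :
    A.det = 0 := by
  by_contra hdet
  let i : Fin C := ⟨0, by omega⟩
  let j : Fin C := ⟨1, by omega⟩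
  have hij : i ≠ j := by simp [i, j, Fin.ext_iff]
  set E : Matrix (Fin C) (Fin C) ℝ := single i j 1 + single j i 1
  obtain ⟨r, hr, hpsd⟩ := ((hA.1.posDef_iff_det_ne_zero).2 hdet).exists_posSemidef_sub_smul
    (posSemidef_one_sub_single_add_single hij)
  have hE : ∀ l m, 0 ≤ E l m := fun l m => by
    simp only [E, Matrix.add_apply, single_apply]
    split_ifs <;> norm_num
  have hEdiag : ∀ l, E l l = 0 := fun l => by simp [E, single_apply]; grind
  have hB : A - r • E ∈ AstarSet C := ⟨hpsd, fun l => by simp [hEdiag, hA.2 l]⟩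
  refine (hmin hB).not_gt (S_lt_S_of_le_of_lt hk hlam hψ (i := i) (j := j)
    (fun l m => sub_le_self _ (mul_nonneg hr.le (hE l m))) ?_)
  simp [E, hij, hr]

theorem stmt6_general (k C : ℕ) (hk : 1 ≤ k) (hC : 2 ≤ C)
    (lam : Fin C → ℝ) (hlam : ∀ i, lam i ∈ Set.Ioo (0 : ℝ) 1)
    (ψ : (Fin k → ℝ) → ℝ) (hmono : ArgwiseStrictMono ψ)
    (A : Matrix (Fin C) (Fin C) ℝ) (hA : A ∈ AstarSet C)
    (hmin : ∀ B ∈ AstarSet C, S ψ lam A ≤ S ψ lam B) :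
    (∃ v : Fin C → ℝ, v ≠ 0 ∧ A.mulVec v = 0) ∧ A.rank ≤ C - 1 := by
  have hdet : A.det = 0 :=
    det_eq_zero_of_isMinOn_S hk hC (fun i => (hlam i).1) hmono hA (isMinOn_iff.2 hmin)
  obtain ⟨v, hv, hAv⟩ := exists_mulVec_eq_zero_iff.2 hdet
  have hrank := rank_lt_card_of_mulVec_eq_zero hv hAv
  rw [Fintype.card_fin] at hrank
  exact ⟨⟨v, hv, hAv⟩, by omega⟩

/-- if `A*` minimizes `S` over `𝒜*` (ψ argument-wise strictly increasing),
then zero is an eigenvalue of `A*` and `rank(A*) ≤ C − 1`. -/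
theorem stmt6 (k C : ℕ) (hk : 1 ≤ k) (hC : 2 ≤ C)
    (lam : Fin C → ℝ) (hlam : ∀ i, lam i ∈ Set.Ioo (0 : ℝ) 1) (hsum : ∑ i, lam i = 1)
    (ψ : (Fin k → ℝ) → ℝ) (hmono : ArgwiseStrictMono ψ)
    (A : Matrix (Fin C) (Fin C) ℝ) (hA : A ∈ AstarSet C)
    (hmin : ∀ B ∈ AstarSet C, S ψ lam A ≤ S ψ lam B) :
    (∃ v : Fin C → ℝ, v ≠ 0 ∧ A.mulVec v = 0) ∧ A.rank ≤ C - 1 :=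
  stmt6_general k C hk hC lam hlam ψ hmono A hA hmin
end

section
/- Let k ≥ 1, C ≥ 2, λ₁,…,λ_C ∈ (0,1) with ∑_{i=1}^C λᵢ = 1, and let ψ : ℝ^k → ℝ be strictly convex and argument-wise strictly increasing. Let A* be the unique minimizer of S over 𝒜*. If i ≠ j are two indices with λᵢ = λⱼ, then A*_{in} = A*_{jn} for every n ∈ {1,…,C} \ {i, j}; equivalently, if M* has unit-norm columns μ₁*,…,μ_C* with (M*)ᵀM* = A*, then (μᵢ*)ᵀμ_n* = (μⱼ*)ᵀμ_n* for all n ∉ {i, j}. -/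
/-!
The objective `S` is strictly convex on all matrices: every entry `A i m` occurs, through the
constant index tuple `j ≡ m`, in the argument of a positively weighted strictly convex term.
Hence `S` has at most one minimizer on the convex set `𝒜*`. Conjugating by the transposition
of `i` and `j` preserves `𝒜*`, and preserves `S` because `λᵢ = λⱼ`; so it fixes the minimizer,
which gives `A*_{in} = A*_{jn}`.
-/

open Matrix

section

variable {k C : ℕ}

lemma convex_AstarSet (C : ℕ) : Convex ℝ (AstarSet C) := by
  rintro A ⟨hA, hAdiag⟩ B ⟨hB, hBdiag⟩ a b ha hb hab
  refine ⟨(hA.smul ha).add (hB.smul hb), fun i => ?_⟩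
  simp [hAdiag, hBdiag, hab]

lemma submatrix_mem_AstarSet {A : Matrix (Fin C) (Fin C) ℝ} (hA : A ∈ AstarSet C)
    (e : Fin C → Fin C) : A.submatrix e e ∈ AstarSet C :=
  ⟨hA.1.submatrix e, fun i => hA.2 (e i)⟩

lemma S_submatrix (ψ : (Fin k → ℝ) → ℝ) {lam : Fin C → ℝ} (σ : Equiv.Perm (Fin C))
    (hσ : ∀ m, lam (σ m) = lam m) (A : Matrix (Fin C) (Fin C) ℝ) :
    S ψ lam (A.submatrix σ σ) = S ψ lam A := by
  refine Fintype.sum_equiv σ _ _ fun i => ?_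
  refine Fintype.sum_equiv (Equiv.piCongrRight fun _ => σ) _ _ fun j => ?_
  simp [hσ]

lemma strictConvexOn_S (hk : 0 < k) {lam : Fin C → ℝ} (hlam : ∀ i, 0 < lam i)
    {ψ : (Fin k → ℝ) → ℝ} (hψ : StrictConvexOn ℝ Set.univ ψ) :
    StrictConvexOn ℝ Set.univ (S ψ lam) := by
  refine ⟨convex_univ, fun A _ B _ hAB a b ha hb hab => ?_⟩
  obtain ⟨i, m, him⟩ : ∃ i m, A i m ≠ B i m := by
    by_contra! h
    exact hAB (Matrix.ext h)
  have hw : ∀ (i : Fin C) (j : Fin k → Fin C), 0 < lam i * ∏ t, lam (j t) := fun i j =>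
    mul_pos (hlam i) (Finset.prod_pos fun t _ => hlam (j t))
  have harg : ∀ (i : Fin C) (j : Fin k → Fin C), (fun t => (a • A + b • B) i (j t) - 1) =
      a • (fun t => A i (j t) - 1) + b • (fun t => B i (j t) - 1) := by
    intro i j
    funext t
    simp only [Matrix.add_apply, Matrix.smul_apply, Pi.add_apply, Pi.smul_apply, smul_eq_mul]
    linear_combination hab
  have hle : ∀ (i : Fin C) (j : Fin k → Fin C), ψ (fun t => (a • A + b • B) i (j t) - 1) ≤
      a • ψ (fun t => A i (j t) - 1) + b • ψ (fun t => B i (j t) - 1) := fun i j =>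
    harg i j ▸ hψ.convexOn.2 trivial trivial ha.le hb.le hab
  have hlt : ψ (fun _ => (a • A + b • B) i m - 1) <
      a • ψ (fun _ : Fin k => A i m - 1) + b • ψ (fun _ : Fin k => B i m - 1) := by
    have hne : (fun _ : Fin k => A i m - 1) ≠ fun _ => B i m - 1 := fun h =>
      him (by simpa using congr_fun h ⟨0, hk⟩)
    exact harg i (fun _ => m) ▸ hψ.2 trivial trivial hne ha hb hab
  simp only [S, Finset.smul_sum, ← mul_smul_comm, ← Finset.sum_add_distrib, ← mul_add]
  exact Finset.sum_lt_sum
    (fun i _ => Finset.sum_le_sum fun j _ => mul_le_mul_of_nonneg_left (hle i j) (hw i j).le)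
    ⟨i, Finset.mem_univ _, Finset.sum_lt_sum
      (fun j _ => mul_le_mul_of_nonneg_left (hle i j) (hw i j).le)
      ⟨fun _ => m, Finset.mem_univ _, mul_lt_mul_of_pos_left hlt (hw i _)⟩⟩

end

theorem stmt10_general (k C : ℕ) (hk : 1 ≤ k)
    (lam : Fin C → ℝ) (hlam : ∀ i, lam i ∈ Set.Ioo (0 : ℝ) 1)
    (ψ : (Fin k → ℝ) → ℝ)
    (hconv : StrictConvexOn ℝ Set.univ ψ)
    (A : Matrix (Fin C) (Fin C) ℝ) (hA : A ∈ AstarSet C)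
    (hmin : ∀ B ∈ AstarSet C, S ψ lam A ≤ S ψ lam B)
    (i j : Fin C) (hlameq : lam i = lam j) :
    ∀ n : Fin C, n ≠ i → n ≠ j → A i n = A j n := by
  intro n hni hnj
  set σ := Equiv.swap i j
  have hσ : ∀ m, lam (σ m) = lam m := by
    intro m
    simp only [σ, Equiv.swap_apply_def]
    split_ifs <;> simp_all
  have hAmin : IsMinOn (S ψ lam) (AstarSet C) A := hmin
  have hσAmin : IsMinOn (S ψ lam) (AstarSet C) (A.submatrix σ σ) := fun B hB =>
    (S_submatrix ψ σ hσ A).trans_le (hmin B hB)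
  have hfix : A.submatrix σ σ = A :=
    ((strictConvexOn_S hk (fun m => (hlam m).1) hconv).subset (Set.subset_univ _)
      (convex_AstarSet C)).eq_of_isMinOn hσAmin hAmin (submatrix_mem_AstarSet hA σ) hA
  calc A i n = A (σ i) (σ n) := (congrFun (congrFun hfix i) n).symm
    _ = A j n := by rw [Equiv.swap_apply_left, Equiv.swap_apply_of_ne_of_ne hni hnj]

/-- if `A*` is the (unique) minimizer of `S` over `𝒜*` and `i ≠ j` have equal
probabilities `λᵢ = λⱼ`, then `A*_{in} = A*_{jn}` for every `n ∉ {i, j}`. -/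
theorem stmt10 (k C : ℕ) (hk : 1 ≤ k) (hC : 2 ≤ C)
    (lam : Fin C → ℝ) (hlam : ∀ i, lam i ∈ Set.Ioo (0 : ℝ) 1) (hsum : ∑ i, lam i = 1)
    (ψ : (Fin k → ℝ) → ℝ)
    (hconv : StrictConvexOn ℝ Set.univ ψ) (hmono : ArgwiseStrictMono ψ)
    (A : Matrix (Fin C) (Fin C) ℝ) (hA : A ∈ AstarSet C)
    (hmin : ∀ B ∈ AstarSet C, S ψ lam A ≤ S ψ lam B)
    (i j : Fin C) (hij : i ≠ j) (hlameq : lam i = lam j) :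
    ∀ n : Fin C, n ≠ i → n ≠ j → A i n = A j n :=
  stmt10_general k C hk lam hlam ψ hconv A hA hmin i j hlameq
end
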